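/- arXiv:1806.06373 — 5 statements merged into one kernel-verified Lean document; each statement's English description precedes it below -/
import Mathlib

section
/- Let f be a real-valued function on the positive orthant ℝⁿ_{>0} that is differentiable at every point of the orthant. Then f is geodesically convex with respect to the log-barrier metric — that is, for all p, q ∈ ℝⁿ_{>0} the function t ↦ f(γ_{pq}(t)) is convex on [0,1], where γ_{pq}(t)ᵢ = pᵢ·(qᵢ/pᵢ)^t — if and only if for all p, q ∈ ℝⁿ_{>0} one has f(p) + Df(p)[v] ≤ f(q), where Df(p) is the derivative of f at p and v ∈ ℝⁿ is the tangent vector of the geodesic at p, namely vᵢ = pᵢ·log(qᵢ/pᵢ). -/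
/-!
Reparametrising a geodesic is affine: the tangent vector at `γ(s)` of the geodesic to `γ(t)` is
`(t - s) • γ'(s)`. Hence the first-order condition at the points of `γ` says exactly that
`f ∘ γ` lies above each of its tangent lines. For a real function this is equivalent to
convexity: convexity bounds secant slopes below by the derivative, and conversely supporting
lines at `a x + b y` give `g (a x + b y) ≤ a g x + b g y`.
-/

open Real Set

theorem convexOn_of_forall_exists_linearMap_add_le {𝕜 E : Type*} [Field 𝕜] [LinearOrder 𝕜]
    [IsStrictOrderedRing 𝕜] [AddCommGroup E] [Module 𝕜 E] {s : Set E} {g : E → 𝕜}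
    (hs : Convex 𝕜 s) (hg : ∀ x ∈ s, ∃ φ : E →ₗ[𝕜] 𝕜, ∀ y ∈ s, g x + φ (y - x) ≤ g y) :
    ConvexOn 𝕜 s g := by
  refine ⟨hs, fun x hx y hy a b ha hb hab => ?_⟩
  set z := a • x + b • y
  obtain ⟨φ, hφ⟩ := hg z (hs hx hy ha hb hab)
  have hφ_zero : a * φ (x - z) + b * φ (y - z) = 0 := by
    rw [← smul_eq_mul, ← smul_eq_mul, ← map_smul, ← map_smul, ← map_add, smul_sub, smul_sub,
      sub_add_sub_comm, ← add_smul, hab, one_smul, sub_self, map_zero]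
  have hsupport := add_le_add (mul_le_mul_of_nonneg_left (hφ x hx) ha)
    (mul_le_mul_of_nonneg_left (hφ y hy) hb)
  simp only [smul_eq_mul]
  linear_combination hsupport - g z * hab - hφ_zero

theorem ConvexOn.add_mul_sub_le_of_hasDerivAt {S : Set ℝ} {g : ℝ → ℝ} {x y g' : ℝ}
    (hg : ConvexOn ℝ S g) (hx : x ∈ S) (hy : y ∈ S) (hg' : HasDerivAt g g' x) :
    g x + g' * (y - x) ≤ g y := by
  rcases lt_trichotomy x y with hxy | rfl | hyx
  · have := hg.le_slope_of_hasDerivAt hx hy hxy hg'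
    rw [slope_def_field, le_div_iff₀ (sub_pos.2 hxy)] at this
    linarith
  · simp
  · have := hg.slope_le_of_hasDerivAt hy hx hyx hg'
    rw [slope_def_field, div_le_iff₀ (sub_pos.2 hyx)] at this
    linarith

section OrthantGeodesic

variable {ι : Type*} {p q : ι → ℝ}

noncomputable def orthantGeodesic (p q : ι → ℝ) (t : ℝ) : ι → ℝ :=
  fun i => p i * (q i / p i) ^ t

@[simp]
theorem orthantGeodesic_zero (p q : ι → ℝ) : orthantGeodesic p q 0 = p := by
  ext i; simp [orthantGeodesic]

theorem orthantGeodesic_one (hp : ∀ i, p i ≠ 0) : orthantGeodesic p q 1 = q := by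
  ext i; simp [orthantGeodesic, mul_div_cancel₀ _ (hp i)]

theorem orthantGeodesic_pos (hp : ∀ i, 0 < p i) (hq : ∀ i, 0 < q i) (t : ℝ) (i : ι) :
    0 < orthantGeodesic p q t i :=
  mul_pos (hp i) (rpow_pos_of_pos (div_pos (hq i) (hp i)) t)

theorem hasDerivAt_orthantGeodesic [Fintype ι] (hp : ∀ i, 0 < p i) (hq : ∀ i, 0 < q i)
    (s : ℝ) :
    HasDerivAt (orthantGeodesic p q)
      (fun i => orthantGeodesic p q s i * log (q i / p i)) s := by
  refine hasDerivAt_pi.2 fun i => ?_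
  simpa [orthantGeodesic, mul_assoc] using
    ((hasStrictDerivAt_const_rpow (div_pos (hq i) (hp i)) s).hasDerivAt.const_mul (p i))

theorem orthantGeodesic_mul_log_div (hp : ∀ i, 0 < p i) (hq : ∀ i, 0 < q i) (s t : ℝ) :
    (fun i => orthantGeodesic p q s i * log (orthantGeodesic p q t i / orthantGeodesic p q s i))
      = (t - s) • fun i => orthantGeodesic p q s i * log (q i / p i) := by
  ext i
  have hqp : 0 < q i / p i := div_pos (hq i) (hp i)
  simp only [orthantGeodesic, mul_div_mul_left _ _ (hp i).ne', ← rpow_sub hqp, log_rpow hqp,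
    Pi.smul_apply, smul_eq_mul]
  ring

end OrthantGeodesic

/-- first-order characterization of geodesic convexity on the positive
orthant with the log-barrier metric.  A differentiable function `f` is geodesically
convex (its restriction to every geodesic `γ_{pq}(t)ᵢ = pᵢ·(qᵢ/pᵢ)^t` is convex on
`[0,1]`) iff for all `p, q` in the orthant,
`f(p) + Df(p)[v] ≤ f(q)` where `vᵢ = pᵢ·log(qᵢ/pᵢ)`. -/
theorem gconvex_first_order_characterization (n : ℕ) (f : (Fin n → ℝ) → ℝ)
    (hf : ∀ x : Fin n → ℝ, (∀ i, 0 < x i) → DifferentiableAt ℝ f x) :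
    (∀ p q : Fin n → ℝ, (∀ i, 0 < p i) → (∀ i, 0 < q i) →
      ConvexOn ℝ (Set.Icc (0 : ℝ) 1)
        (fun t : ℝ => f (fun i => p i * (q i / p i) ^ t))) ↔
    (∀ p q : Fin n → ℝ, (∀ i, 0 < p i) → (∀ i, 0 < q i) →
      f p + fderiv ℝ f p (fun i => p i * Real.log (q i / p i)) ≤ f q) := by
  refine ⟨fun hconv p q hp hq => ?_, fun htan p q hp hq => ?_⟩
  · have hderiv := (hf _ (orthantGeodesic_pos hp hq 0)).hasFDerivAt.comp_hasDerivAt 0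
      (hasDerivAt_orthantGeodesic hp hq 0)
    simp only [orthantGeodesic_zero] at hderiv
    have hconv' : ConvexOn ℝ (Icc 0 1) (f ∘ orthantGeodesic p q) := hconv p q hp hq
    simpa [orthantGeodesic_one fun i => (hp i).ne'] using
      hconv'.add_mul_sub_le_of_hasDerivAt (left_mem_Icc.2 zero_le_one)
        (right_mem_Icc.2 zero_le_one) hderiv
  · change ConvexOn ℝ (Icc 0 1) (f ∘ orthantGeodesic p q)
    refine convexOn_of_forall_exists_linearMap_add_le (convex_Icc 0 1) fun s _ => ?_
    -- the derivative of `f ∘ γ` at `s`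
    refine ⟨(fderiv ℝ f (orthantGeodesic p q s)).toLinearMap ∘ₗ
      LinearMap.toSpanSingleton ℝ _ (fun i => orthantGeodesic p q s i * log (q i / p i)),
      fun t _ => ?_⟩
    simpa [← orthantGeodesic_mul_log_div hp hq] using
      htan _ _ (orthantGeodesic_pos hp hq s) (orthantGeodesic_pos hp hq t)
end

section
/- Let T be a linear map from n×n real symmetric matrices to m×m real symmetric matrices that is strictly positive, i.e., T(X) is positive definite whenever X is positive definite. Then T is geodesically convex with respect to the Loewner order along geodesics of the positive definite cone: for every n×n positive definite matrix P, every n×n symmetric matrix Q, and every t ∈ [0,1], the matrix (1−t)·T(γ(0)) + t·T(γ(1)) − T(γ(t)) is positive semidefinite, where γ(t) = √P · exp(t·Q) · √P. -/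
open Matrix

namespace Matrix.PosSemidef

open scoped ComplexOrder

/-- The square root of a positive semidefinite matrix, as defined in the older Mathlib
(`Matrix.PosSemidef.sqrt`, since removed). -/
noncomputable def sqrt {n 𝕜 : Type*} [Fintype n] [RCLike 𝕜] [DecidableEq n]
    {A : Matrix n n 𝕜} (hA : PosSemidef A) : Matrix n n 𝕜 :=
  hA.1.eigenvectorUnitary.1 * diagonal ((↑) ∘ (√·) ∘ hA.1.eigenvalues) *
    (star hA.1.eigenvectorUnitary : Matrix n n 𝕜)

end Matrix.PosSemidef

/-!
Along the geodesic, `T (√P exp(tQ) √P)` is the image of `exp (t • Q)` under the linear map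
`X ↦ T (√P X √P)`. This map is monotone for the Loewner order: conjugation preserves it, and a
strictly positive map is positive because `T (X + ε • 1)` is positive definite for every `ε > 0`.
So it suffices that `t ↦ exp (t • Q)` is Loewner convex, and by the functional calculus this is
the convexity of `t ↦ exp (t z)` at each eigenvalue `z` of `Q`.
-/

open Filter Topology
open scoped ComplexOrder MatrixOrder

theorem ConvexOn.monotone_linearMap_comp {𝕜 E β γ : Type*} [Semiring 𝕜] [PartialOrder 𝕜]
    [AddCommMonoid E] [SMul 𝕜 E] [AddCommMonoid β] [PartialOrder β] [Module 𝕜 β]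
    [AddCommMonoid γ] [PartialOrder γ] [Module 𝕜 γ] {s : Set E} {f : E → β}
    (hf : ConvexOn 𝕜 s f) (g : β →ₗ[𝕜] γ) (hg : Monotone g) : ConvexOn 𝕜 s (g ∘ f) :=
  ⟨hf.1, fun x hx y hy a b ha hb hab => by
    simpa only [Function.comp_apply, map_add, map_smul] using hg (hf.2 hx hy ha hb hab)⟩

namespace Matrix

variable {ι κ 𝕜 : Type*} [DecidableEq ι] [Fintype κ] [RCLike 𝕜]

theorem PosSemidef.map_of_map_posDef (T : Matrix ι ι 𝕜 →ₗ[ℝ] Matrix κ κ 𝕜)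
    (hT : ∀ X, X.PosDef → (T X).PosDef) {X : Matrix ι ι 𝕜} (hX : X.PosSemidef) :
    (T X).PosSemidef := by
  have hshift : ∀ ε : ℝ, 0 < ε → (T X + ε • T 1).PosDef := fun ε hε => by
    simpa only [map_add, map_smul] using hT _ (PosDef.posSemidef_add hX (PosDef.one.smul hε))
  refine .of_dotProduct_mulVec_nonneg ?_ fun x => ?_
  · -- `T X = (T X + 1 • T 1) - T 1` is a difference of Hermitian matrices.
    simpa using (hshift 1 one_pos).isHermitian.sub (hT 1 PosDef.one).isHermitian
  · have hcont : Continuous fun ε : ℝ => star x ⬝ᵥ (T X + ε • T 1) *ᵥ x := by fun_prop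
    refine ge_of_tendsto (x := 𝓝[>] (0 : ℝ)) ?_ (eventually_nhdsWithin_of_forall
      fun ε hε => (hshift ε hε).posSemidef.dotProduct_mulVec_nonneg x)
    simpa using (hcont.tendsto 0).mono_left nhdsWithin_le_nhds

theorem monotone_of_map_posDef (T : Matrix ι ι 𝕜 →ₗ[ℝ] Matrix κ κ 𝕜)
    (hT : ∀ X, X.PosDef → (T X).PosDef) : Monotone T := fun _ _ h => by
  simpa only [le_iff, map_sub] using (le_iff.1 h).map_of_map_posDef T hT

variable [Fintype ι]

theorem PosSemidef.sqrt_eq_cfc {A : Matrix ι ι 𝕜} (hA : A.PosSemidef) :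
    hA.sqrt = cfc Real.sqrt A := by
  rw [hA.isHermitian.cfc_eq]
  rfl

theorem PosSemidef.isSelfAdjoint_sqrt {A : Matrix ι ι 𝕜} (hA : A.PosSemidef) :
    IsSelfAdjoint hA.sqrt :=
  hA.sqrt_eq_cfc ▸ cfc_predicate _ _

theorem IsHermitian.exp_smul_eq_cfc {Q : Matrix ι ι 𝕜} (hQ : Q.IsHermitian) (s : ℝ) :
    NormedSpace.exp (s • Q) = cfc (fun x => Real.exp (s * x)) Q := by
  -- `NormedSpace.exp` only depends on the topology, so any algebra norm will do here.
  have := @CFC.real_exp_eq_normedSpace_exp (Matrix ι ι 𝕜) Matrix.linftyOpNormedRing _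
    Matrix.linftyOpNormedAlgebra IsHermitian.instContinuousFunctionalCalculus (s • Q)
    ((IsSelfAdjoint.all s).smul hQ.isSelfAdjoint)
  exact this.symm.trans (cfc_comp_smul s Real.exp Q).symm

theorem IsHermitian.convexOn_exp_smul {Q : Matrix ι ι 𝕜} (hQ : Q.IsHermitian) :
    ConvexOn ℝ Set.univ fun s : ℝ => NormedSpace.exp (s • Q) := by
  refine ⟨convex_univ, fun x _ y _ a b ha hb hab => ?_⟩
  simp only [hQ.exp_smul_eq_cfc]
  rw [← cfc_smul a (fun z => Real.exp (x * z)) Q, ← cfc_smul b (fun z => Real.exp (y * z)) Q,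
    ← cfc_add Q (fun z => a • Real.exp (x * z)) (fun z => b • Real.exp (y * z))]
  refine cfc_mono fun z _ => ?_
  simpa [add_mul, mul_assoc] using
    convexOn_exp.2 (Set.mem_univ (x * z)) (Set.mem_univ (y * z)) ha hb hab

end Matrix

theorem strictly_positive_map_loewner_gconvex_general (n m : ℕ)
    (T : Matrix (Fin n) (Fin n) ℝ →ₗ[ℝ] Matrix (Fin m) (Fin m) ℝ)
    (hTpos : ∀ X : Matrix (Fin n) (Fin n) ℝ, X.PosDef → (T X).PosDef)
    (P Q : Matrix (Fin n) (Fin n) ℝ) (hP : P.PosDef) (hQ : Q.IsSymm) :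
    ∀ t ∈ Set.Icc (0 : ℝ) 1,
      ((1 - t) •
          T (hP.posSemidef.sqrt * NormedSpace.exp ((0 : ℝ) • Q) * hP.posSemidef.sqrt)
        + t •
          T (hP.posSemidef.sqrt * NormedSpace.exp ((1 : ℝ) • Q) * hP.posSemidef.sqrt)
        - T (hP.posSemidef.sqrt * NormedSpace.exp (t • Q) * hP.posSemidef.sqrt)).PosSemidef := by
  rintro t ⟨ht0, ht1⟩
  set S := hP.posSemidef.sqrt
  have hmono : Monotone (T ∘ₗ LinearMap.mulLeftRight ℝ (S, S)) :=
    (monotone_of_map_posDef T hTpos).comp fun _ _ h =>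
      hP.posSemidef.isSelfAdjoint_sqrt.conjugate_le_conjugate h
  have hconv := (isHermitian_iff_isSymm.2 hQ).convexOn_exp_smul.monotone_linearMap_comp _ hmono
  simpa [le_iff] using
    hconv.2 (Set.mem_univ 0) (Set.mem_univ 1) (sub_nonneg.2 ht1) ht0 (sub_add_cancel 1 t)

/-- a strictly positive linear map `T` between spaces of symmetric
matrices is geodesically convex with respect to the Loewner order along the
geodesics `γ(t) = √P · exp(t·Q) · √P` of the positive definite cone:
`(1−t)·T(γ(0)) + t·T(γ(1)) − T(γ(t))` is positive semidefinite for `t ∈ [0,1]`. -/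
theorem strictly_positive_map_loewner_gconvex (n m : ℕ)
    (T : Matrix (Fin n) (Fin n) ℝ →ₗ[ℝ] Matrix (Fin m) (Fin m) ℝ)
    (hTsymm : ∀ X : Matrix (Fin n) (Fin n) ℝ, X.IsSymm → (T X).IsSymm)
    (hTpos : ∀ X : Matrix (Fin n) (Fin n) ℝ, X.PosDef → (T X).PosDef)
    (P Q : Matrix (Fin n) (Fin n) ℝ) (hP : P.PosDef) (hQ : Q.IsSymm) :
    ∀ t ∈ Set.Icc (0 : ℝ) 1,
      ((1 - t) •
          T (hP.posSemidef.sqrt * NormedSpace.exp ((0 : ℝ) • Q) * hP.posSemidef.sqrt)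
        + t •
          T (hP.posSemidef.sqrt * NormedSpace.exp ((1 : ℝ) • Q) * hP.posSemidef.sqrt)
        - T (hP.posSemidef.sqrt * NormedSpace.exp (t • Q) * hP.posSemidef.sqrt)).PosSemidef :=
  strictly_positive_map_loewner_gconvex_general n m T hTpos P Q hP hQ
end

section
/- (Kadison's inequality.) Let T be a linear map from n×n real symmetric matrices to m×m real symmetric matrices such that T maps positive semidefinite matrices to positive semidefinite matrices and T(Iₙ) = Iₘ. Then for every n×n real symmetric matrix X, the matrix T(X²) − (T(X))² is positive semidefinite. -/
/-!
Diagonalise `X = ∑ i, λᵢ • Pᵢ` with spectral projections `Pᵢ ⪰ 0`, so that `X ^ k = ∑ i, λᵢ ^ k • Pᵢ`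
for every `k`. With `Qᵢ = T Pᵢ ⪰ 0`, each block matrix `[[Qᵢ, λᵢ Qᵢ], [λᵢ Qᵢ, λᵢ² Qᵢ]]` is a
congruence of `Qᵢ`, hence positive semidefinite, and so is their sum `[[1, T X], [T X, T (X²)]]`.
Its Schur complement is `T (X²) - (T X)²`.
-/

open Matrix Unitary
open scoped ComplexOrder

variable {𝕜 𝕜' ι n m : Type*} [RCLike 𝕜] [RCLike 𝕜'] [Fintype n] [DecidableEq n]
  [Fintype m] [DecidableEq m]

theorem Matrix.fromBlocks_sum {α l o p q : Type*} [AddCommMonoid α] (s : Finset ι)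
    (A : ι → Matrix l p α) (B : ι → Matrix l q α) (C : ι → Matrix o p α) (D : ι → Matrix o q α) :
    fromBlocks (∑ i ∈ s, A i) (∑ i ∈ s, B i) (∑ i ∈ s, C i) (∑ i ∈ s, D i) =
      ∑ i ∈ s, fromBlocks (A i) (B i) (C i) (D i) := by
  ext (a | a) (b | b) <;> simp [sum_apply]

theorem Matrix.PosSemidef.fromBlocks_smul {Q : Matrix m m 𝕜} (hQ : Q.PosSemidef) (c : ℝ) :
    (fromBlocks Q (c • Q) (c • Q) (c ^ 2 • Q)).PosSemidef := by
  convert hQ.conjTranspose_mul_mul_same (fromCols 1 (c • 1) : Matrix m (m ⊕ m) 𝕜) using 1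
  rw [conjTranspose_fromCols_eq_fromRows_conjTranspose, fromRows_mul, fromRows_mul_fromCols]
  simp [sq, smul_smul]

theorem Matrix.posSemidef_sub_mul_self_of_fromBlocks_one {B D : Matrix m m 𝕜}
    (h : (fromBlocks 1 B B D).PosSemidef) : (D - B * B).PosSemidef := by
  have hB : Bᴴ = B := (isHermitian_fromBlocks_iff.mp h.1).2.1
  have : Invertible (1 : Matrix m m 𝕜) := invertibleOne
  have := (PosDef.one.fromBlocks₁₁ B D).mp (by rwa [hB])
  simpa [hB] using this

namespace Matrix.IsHermitian

variable {A : Matrix n n 𝕜}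

noncomputable def eigenprojection (hA : A.IsHermitian) (i : n) : Matrix n n 𝕜 :=
  conjStarAlgAut 𝕜 _ hA.eigenvectorUnitary (single i i 1)

theorem posSemidef_eigenprojection (hA : A.IsHermitian) (i : n) :
    (hA.eigenprojection i).PosSemidef := by
  rw [eigenprojection, conjStarAlgAut_apply, ← diagonal_single]
  refine (posSemidef_diagonal_iff.mpr fun j => ?_).mul_mul_conjTranspose_same _
  rcases eq_or_ne j i with rfl | h <;> simp [*]

theorem cfc_eq_sum_smul_eigenprojection (hA : A.IsHermitian) (f : ℝ → ℝ) :
    cfc f A = ∑ i, f (hA.eigenvalues i) • hA.eigenprojection i := by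
  rw [hA.cfc_eq, IsHermitian.cfc, ← sum_single_eq_diagonal, map_sum]
  refine Finset.sum_congr rfl fun i _ => ?_
  rw [eigenprojection, RCLike.real_smul_eq_coe_smul (K := 𝕜), ← map_smul, smul_single,
    smul_eq_mul, mul_one, Function.comp_apply, Function.comp_apply]

theorem posSemidef_fromBlocks_map (hA : A.IsHermitian) (T : Matrix n n 𝕜 →ₗ[ℝ] Matrix m m 𝕜')
    (hT : ∀ X, X.PosSemidef → (T X).PosSemidef) :
    (Matrix.fromBlocks (T 1) (T A) (T A) (T (A * A))).PosSemidef := by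
  have hpow (k : ℕ) : T (A ^ k) = ∑ i, hA.eigenvalues i ^ k • T (hA.eigenprojection i) := by
    rw [← cfc_pow_id (R := ℝ) A k, hA.cfc_eq_sum_smul_eigenprojection, map_sum]
    simp only [map_smul]
  have hT1 : T A = ∑ i, hA.eigenvalues i • T (hA.eigenprojection i) := by
    simpa only [pow_one] using hpow 1
  rw [← pow_zero A, hpow, ← sq, hpow, hT1]
  simpa only [pow_zero, one_smul, fromBlocks_sum] using
    posSemidef_sum Finset.univ fun i _ =>
      (hT _ (hA.posSemidef_eigenprojection i)).fromBlocks_smul (hA.eigenvalues i)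

end Matrix.IsHermitian

theorem kadison_inequality_general (n m : ℕ)
    (T : Matrix (Fin n) (Fin n) ℝ →ₗ[ℝ] Matrix (Fin m) (Fin m) ℝ)
    (hTpos : ∀ X : Matrix (Fin n) (Fin n) ℝ, X.PosSemidef → (T X).PosSemidef)
    (hTone : T 1 = 1) :
    ∀ X : Matrix (Fin n) (Fin n) ℝ, X.IsSymm →
      (T (X * X) - (T X) * (T X)).PosSemidef := by
  intro X hX
  have hblock := (isHermitian_iff_isSymm.mpr hX).posSemidef_fromBlocks_map T hTpos
  rw [hTone] at hblock
  exact posSemidef_sub_mul_self_of_fromBlocks_one hblock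

/-- Kadison's inequality: if a linear map `T` between spaces of
symmetric matrices maps positive semidefinite matrices to positive semidefinite
matrices and is unital (`T(Iₙ) = Iₘ`), then `T(X²) ⪰ (T(X))²` for every symmetric `X`. -/
theorem kadison_inequality (n m : ℕ)
    (T : Matrix (Fin n) (Fin n) ℝ →ₗ[ℝ] Matrix (Fin m) (Fin m) ℝ)
    (hTsymm : ∀ X : Matrix (Fin n) (Fin n) ℝ, X.IsSymm → (T X).IsSymm)
    (hTpos : ∀ X : Matrix (Fin n) (Fin n) ℝ, X.PosSemidef → (T X).PosSemidef)
    (hTone : T 1 = 1) :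
    ∀ X : Matrix (Fin n) (Fin n) ℝ, X.IsSymm →
      (T (X * X) - (T X) * (T X)).PosSemidef :=
  kadison_inequality_general n m T hTpos hTone
end

section
/- Let T be a linear map from n×n real symmetric matrices to m×m real symmetric matrices that maps positive semidefinite matrices to positive semidefinite matrices and positive definite matrices to positive definite matrices. Then the function X ↦ log det(T(X)) is geodesically convex on the positive definite cone: for every n×n positive definite matrix P and every n×n symmetric matrix Q, the function t ↦ log det(T(√P · exp(t·Q) · √P)) is convex on ℝ. -/
open Matrix

namespace LogDetGCvx

/-- A continuous midpoint-convex function on `ℝ` is convex. -/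
theorem convexOn_of_midpoint {g : ℝ → ℝ} (hc : Continuous g)
    (hm : ∀ s t : ℝ, g ((s + t) / 2) ≤ (g s + g t) / 2) :
    ConvexOn ℝ Set.univ g := by
  have key : ∀ x y : ℝ, ∀ c ∈ Set.Icc (0:ℝ) 1,
      g ((1 - c) * x + c * y) ≤ (1 - c) * g x + c * g y := by
    intro x y
    obtain ⟨h, hh⟩ : ∃ h : ℝ → ℝ,
        h = fun c => g ((1 - c) * x + c * y) - ((1 - c) * g x + c * g y) := ⟨_, rfl⟩
    have hhc : Continuous h := by
      rw [hh]
      apply Continuous.sub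
      · exact hc.comp (by continuity)
      · continuity
    have h0 : h 0 = 0 := by simp [hh]
    have h1 : h 1 = 0 := by simp [hh]
    have hmid : ∀ s t : ℝ, h ((s + t) / 2) ≤ (h s + h t) / 2 := by
      intro s t
      have e1 : (1 - (s + t) / 2) * x + (s + t) / 2 * y
          = (((1 - s) * x + s * y) + ((1 - t) * x + t * y)) / 2 := by ring
      have e4 : (1 - (s + t) / 2) * g x + (s + t) / 2 * g y
          = (((1 - s) * g x + s * g y) + ((1 - t) * g x + t * g y)) / 2 := by ring
      have h5 := hm ((1 - s) * x + s * y) ((1 - t) * x + t * y)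
      simp only [hh]
      rw [e1, e4]
      linarith
    suffices hle : ∀ c ∈ Set.Icc (0:ℝ) 1, h c ≤ 0 by
      intro c hc01
      have := hle c hc01
      simp only [hh] at this
      linarith
    by_contra hcon
    push_neg at hcon
    obtain ⟨c₁, hc₁, hc₁pos⟩ := hcon
    obtain ⟨z, hzI, hzmax⟩ := isCompact_Icc.exists_isMaxOn
      (Set.nonempty_Icc.mpr zero_le_one) hhc.continuousOn
    rw [isMaxOn_iff] at hzmax
    have hM : 0 < h z := lt_of_lt_of_le hc₁pos (hzmax c₁ hc₁)
    set K : Set ℝ := Set.Icc 0 1 ∩ h ⁻¹' {h z} with hK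
    have hKcl : IsClosed K := isClosed_Icc.inter (isClosed_singleton.preimage hhc)
    have hKz : z ∈ K := ⟨hzI, rfl⟩
    have hKbdd : BddBelow K := ⟨0, fun w hw => hw.1.1⟩
    have hc₀ := hKcl.csInf_mem ⟨z, hKz⟩ hKbdd
    set c₀ := sInf K with hc₀def
    have hc₀I : c₀ ∈ Set.Icc (0:ℝ) 1 := hc₀.1
    have hc₀M : h c₀ = h z := hc₀.2
    have hc₀0 : c₀ ≠ 0 := by intro e; rw [e, h0] at hc₀M; linarith
    have hc₀1 : c₀ ≠ 1 := by intro e; rw [e, h1] at hc₀M; linarith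
    have hc0 : 0 < c₀ := lt_of_le_of_ne hc₀I.1 (Ne.symm hc₀0)
    have hc1 : c₀ < 1 := lt_of_le_of_ne hc₀I.2 hc₀1
    set ε := min c₀ (1 - c₀) with hε
    have hεpos : 0 < ε := lt_min hc0 (by linarith)
    have hε1 : ε ≤ c₀ := min_le_left _ _
    have hε2 : ε ≤ 1 - c₀ := min_le_right _ _
    have mem1 : c₀ - ε ∈ Set.Icc (0:ℝ) 1 := ⟨by linarith, by linarith⟩
    have mem2 : c₀ + ε ∈ Set.Icc (0:ℝ) 1 := ⟨by linarith, by linarith⟩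
    have hlt : h (c₀ - ε) < h z := by
      refine lt_of_le_of_ne (hzmax _ mem1) ?_
      intro e
      have : c₀ - ε ∈ K := ⟨mem1, e⟩
      have := csInf_le hKbdd this
      rw [← hc₀def] at this
      linarith
    have hble := hzmax _ mem2
    have e : ((c₀ - ε) + (c₀ + ε)) / 2 = c₀ := by ring
    have := hmid (c₀ - ε) (c₀ + ε)
    rw [e, hc₀M] at this
    linarith
  refine ⟨convex_univ, ?_⟩
  intro x _ y _ a b ha hb hab
  have := key x y b ⟨hb, by linarith⟩
  have haa : a = 1 - b := by linarith
  simp only [smul_eq_mul, haa]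
  exact this

variable {k : ℕ}

lemma eigenvalues_le_one {K : Matrix (Fin k) (Fin k) ℝ} (hK : K.IsHermitian)
    (h1K : (1 - K).PosSemidef) (i : Fin k) : hK.eigenvalues i ≤ 1 := by
  set v : Fin k → ℝ := ⇑(hK.eigenvectorBasis i) with hv
  have hvne : v ≠ 0 := by
    intro h; apply hK.eigenvectorBasis.orthonormal.ne_zero i; rw [hv] at h
    exact (WithLp.ofLp_injective 2) (by simpa using h)
  have hKv : K *ᵥ v = hK.eigenvalues i • v := hK.mulVec_eigenvectorBasis i
  have hpsd := h1K.dotProduct_mulVec_nonneg v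
  have hcalc : star v ⬝ᵥ ((1 - K) *ᵥ v) = (1 - hK.eigenvalues i) * (star v ⬝ᵥ v) := by
    rw [sub_mulVec, one_mulVec, hKv, dotProduct_sub, dotProduct_smul]
    simp [smul_eq_mul]
    ring
  rw [hcalc] at hpsd
  have hpos : 0 < star v ⬝ᵥ v := dotProduct_star_self_pos_iff.mpr hvne
  nlinarith

open scoped MatrixOrder in
lemma cfc_sqrt_facts {A : Matrix (Fin k) (Fin k) ℝ} (hA : A.PosSemidef) :
    (hA.1.cfc Real.sqrt).PosSemidef ∧ hA.1.cfc Real.sqrt * hA.1.cfc Real.sqrt = A := by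
  have h : hA.1.cfc Real.sqrt = CFC.sqrt A := by
    rw [← hA.1.cfc_eq, CFC.sqrt_eq_real_sqrt A hA.nonneg]
    exact (cfcₙ_eq_cfc (hf0 := Real.sqrt_zero)).symm
  rw [h]
  exact ⟨(CFC.sqrt_nonneg A).posSemidef, CFC.sqrt_mul_sqrt_self A hA.nonneg⟩

lemma det_le_det {A B : Matrix (Fin k) (Fin k) ℝ} (hA : A.PosSemidef) (hB : B.PosDef)
    (hAB : (B - A).PosSemidef) : A.det ≤ B.det := by
  classical
  obtain ⟨R, hRdef⟩ : ∃ R, R = hB.posSemidef.1.cfc Real.sqrt := ⟨_, rfl⟩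
  have hR : R.PosSemidef := hRdef ▸ (cfc_sqrt_facts hB.posSemidef).1
  have hRR : R * R = B := by rw [hRdef]; exact (cfc_sqrt_facts hB.posSemidef).2
  have hdetB : 0 < B.det := hB.det_pos
  have hRdet : R.det * R.det = B.det := by rw [← det_mul, hRR]
  have hRdet0 : R.det ≠ 0 := by
    intro h; rw [h, mul_zero] at hRdet; exact hdetB.ne' hRdet.symm
  have hRunit : IsUnit R.det := isUnit_iff_ne_zero.mpr hRdet0
  have hRinvH : (R⁻¹)ᴴ = R⁻¹ := by rw [conjTranspose_nonsing_inv, hR.1]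
  obtain ⟨Kk, hKdef⟩ : ∃ Kk, Kk = R⁻¹ * A * R⁻¹ := ⟨_, rfl⟩
  have hK : Kk.PosSemidef := by
    have := hA.mul_mul_conjTranspose_same R⁻¹
    rwa [hRinvH, ← hKdef] at this
  have hRinvB : R⁻¹ * B * R⁻¹ = 1 := by
    rw [← hRR, show R⁻¹ * (R * R) * R⁻¹ = (R⁻¹ * R) * (R * R⁻¹) by
      simp only [Matrix.mul_assoc], Matrix.nonsing_inv_mul _ hRunit,
      Matrix.mul_nonsing_inv _ hRunit, Matrix.one_mul]
  have h1K : (1 - Kk).PosSemidef := by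
    have h2 : R⁻¹ * (B - A) * R⁻¹ = 1 - Kk := by
      rw [Matrix.mul_sub, Matrix.sub_mul, hRinvB, ← hKdef]
    have := hAB.mul_mul_conjTranspose_same R⁻¹
    rwa [hRinvH, h2] at this
  have hdetK : Kk.det ≤ 1 := by
    rw [hK.1.det_eq_prod_eigenvalues]
    refine Finset.prod_le_one (fun i _ => ?_) (fun i _ => ?_)
    · exact hK.eigenvalues_nonneg i
    · exact eigenvalues_le_one hK.1 h1K i
  have hdetKA : Kk.det = R⁻¹.det * A.det * R⁻¹.det := by
    rw [hKdef, det_mul, det_mul]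
  have hRinvdet : R⁻¹.det = R.det⁻¹ := by
    rw [det_nonsing_inv, Ring.inverse_eq_inv']
  have hAd : A.det = Kk.det * B.det := by
    rw [hdetKA, hRinvdet, ← hRdet]
    field_simp
  rw [hAd]
  nlinarith [hdetK, hdetB]

lemma det_sq_le {μ : ℕ} {ι : Type*} [Fintype ι] [DecidableEq ι]
    (X Y : Matrix (Fin μ) ι ℝ) (hX : (X * Xᴴ).PosDef) (hY : (Y * Yᴴ).PosDef) :
    (X * Yᴴ).det ^ 2 ≤ (X * Xᴴ).det * (Y * Yᴴ).det := by
  classical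
  obtain ⟨S1, hS1⟩ : ∃ S1, S1 = X * Xᴴ := ⟨_, rfl⟩
  rw [← hS1] at hX ⊢
  have hS1det : 0 < S1.det := hX.det_pos
  have hS1unit : IsUnit S1.det := isUnit_iff_ne_zero.mpr hS1det.ne'
  have hS1H : S1ᴴ = S1 := hX.isHermitian
  have hS1invH : (S1⁻¹)ᴴ = S1⁻¹ := by rw [conjTranspose_nonsing_inv, hS1H]
  obtain ⟨Pp, hPp⟩ : ∃ Pp : Matrix ι ι ℝ, Pp = Xᴴ * S1⁻¹ * X := ⟨_, rfl⟩
  have hPH : Ppᴴ = Pp := by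
    rw [hPp, conjTranspose_mul, conjTranspose_mul, hS1invH, conjTranspose_conjTranspose,
      Matrix.mul_assoc]
  have hPP : Pp * Pp = Pp := by
    rw [hPp]
    calc Xᴴ * S1⁻¹ * X * (Xᴴ * S1⁻¹ * X)
        = Xᴴ * S1⁻¹ * (X * Xᴴ) * (S1⁻¹ * X) := by
          simp only [Matrix.mul_assoc]
      _ = Xᴴ * S1⁻¹ * X := by
          rw [← hS1, Matrix.mul_assoc (Xᴴ * S1⁻¹), ← Matrix.mul_assoc S1,
            Matrix.mul_nonsing_inv _ hS1unit, Matrix.one_mul, Matrix.mul_assoc]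
  have h1P : (1 - Pp).PosSemidef := by
    have hH : (1 - Pp)ᴴ = 1 - Pp := by rw [conjTranspose_sub, conjTranspose_one, hPH]
    have hmul : (1 - Pp)ᴴ * (1 - Pp) = 1 - Pp := by
      have hexp : (1 - Pp) * (1 - Pp) = 1 - Pp - Pp + Pp * Pp := by noncomm_ring
      rw [hH, hexp, hPP]
      abel
    exact hmul ▸ posSemidef_conjTranspose_mul_self (1 - Pp)
  have hApsd : (Y * Pp * Yᴴ).PosSemidef := by
    have hPpsd : Pp.PosSemidef := by
      have := (hX.posSemidef.inv).conjTranspose_mul_mul_same X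
      rwa [← hPp] at this
    exact hPpsd.mul_mul_conjTranspose_same Y
  have hBA : (Y * Yᴴ - Y * Pp * Yᴴ).PosSemidef := by
    have := h1P.mul_mul_conjTranspose_same Y
    have he : Y * (1 - Pp) * Yᴴ = Y * Yᴴ - Y * Pp * Yᴴ := by
      rw [Matrix.mul_sub, Matrix.mul_one, Matrix.sub_mul]
    rwa [he] at this
  have hmono := det_le_det hApsd hY hBA
  have hAval : (Y * Pp * Yᴴ).det * S1.det = (X * Yᴴ).det ^ 2 := by
    have he : Y * Pp * Yᴴ = (X * Yᴴ)ᴴ * S1⁻¹ * (X * Yᴴ) := by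
      rw [conjTranspose_mul, conjTranspose_conjTranspose, hPp]
      simp only [Matrix.mul_assoc]
    rw [he, det_mul, det_mul, det_conjTranspose, det_nonsing_inv, Ring.inverse_eq_inv']
    have : star (X * Yᴴ).det = (X * Yᴴ).det := star_trivial _
    rw [this]
    field_simp
  nlinarith [hmono, hS1det, hY.det_pos]

lemma posDef_conj {k : ℕ} {D W : Matrix (Fin k) (Fin k) ℝ} (hD : D.PosDef)
    (hW : IsUnit W.det) : (W * D * Wᴴ).PosDef := by
  refine Matrix.PosDef.of_dotProduct_mulVec_pos (hD.posSemidef.mul_mul_conjTranspose_same W).1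
    (fun x hx => ?_)
  have hWHunit : IsUnit Wᴴ := by
    rw [Matrix.isUnit_iff_isUnit_det, det_conjTranspose]
    exact (star_trivial W.det) ▸ hW
  have hx' : Wᴴ *ᵥ x ≠ 0 := by
    intro h0
    exact hx ((Matrix.mulVec_injective_iff_isUnit.mpr hWHunit)
      (show Wᴴ *ᵥ x = Wᴴ *ᵥ 0 by rw [h0, Matrix.mulVec_zero]))
  have hq := hD.dotProduct_mulVec_pos hx'
  have he : star x ⬝ᵥ ((W * D * Wᴴ) *ᵥ x) = star (Wᴴ *ᵥ x) ⬝ᵥ (D *ᵥ (Wᴴ *ᵥ x)) := by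
    rw [star_mulVec, conjTranspose_conjTranspose, ← Matrix.mulVec_mulVec,
      ← Matrix.mulVec_mulVec, Matrix.dotProduct_mulVec]
  rw [he]
  exact hq

end LogDetGCvx

/-- for a linear map `T` between spaces of symmetric matrices mapping
PSD matrices to PSD matrices and PD matrices to PD matrices, the function
`X ↦ log det(T(X))` is geodesically convex on the positive definite cone:
`t ↦ log det(T(√P · exp(t·Q) · √P))` is convex on `ℝ`. -/
theorem logDet_positive_map_gconvex (n m : ℕ)
    (T : Matrix (Fin n) (Fin n) ℝ →ₗ[ℝ] Matrix (Fin m) (Fin m) ℝ)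
    (hTsymm : ∀ X : Matrix (Fin n) (Fin n) ℝ, X.IsSymm → (T X).IsSymm)
    (hTpsd : ∀ X : Matrix (Fin n) (Fin n) ℝ, X.PosSemidef → (T X).PosSemidef)
    (hTpd : ∀ X : Matrix (Fin n) (Fin n) ℝ, X.PosDef → (T X).PosDef)
    (P Q : Matrix (Fin n) (Fin n) ℝ) (hP : P.PosDef) (hQ : Q.IsSymm) :
    ConvexOn ℝ Set.univ
      (fun t : ℝ =>
        Real.log
          (T (hP.posSemidef.1.cfc Real.sqrt * NormedSpace.exp (t • Q) * hP.posSemidef.1.cfc Real.sqrt)).det) := by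
  classical
  obtain ⟨S, hSdef⟩ : ∃ S, S = hP.posSemidef.1.cfc Real.sqrt := ⟨_, rfl⟩
  rw [← hSdef]
  have hS : S.PosSemidef := hSdef ▸ (LogDetGCvx.cfc_sqrt_facts hP.posSemidef).1
  have hSH : Sᴴ = S := hS.1
  have hSS : S * S = P := by rw [hSdef]; exact (LogDetGCvx.cfc_sqrt_facts hP.posSemidef).2
  have hSdet : S.det ≠ 0 := by
    have h : S.det * S.det = P.det := by rw [← det_mul, hSS]
    intro h0; rw [h0, zero_mul] at h; exact hP.det_pos.ne' h.symm
  have hQh : Q.IsHermitian := (Matrix.conjTranspose_eq_transpose_of_trivial Q).trans hQ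
  obtain ⟨V, hVdef⟩ : ∃ V, V = (hQh.eigenvectorUnitary : Matrix (Fin n) (Fin n) ℝ) := ⟨_, rfl⟩
  obtain ⟨lam, hlamdef⟩ : ∃ lam, lam = hQh.eigenvalues := ⟨_, rfl⟩
  have hV2 : V * star V = 1 := by
    rw [hVdef]; exact Matrix.mem_unitaryGroup_iff.mp hQh.eigenvectorUnitary.2
  have hVdet : IsUnit V.det := Matrix.isUnit_det_of_right_inverse hV2
  have hVunit : IsUnit V := (Matrix.isUnit_iff_isUnit_det V).mpr hVdet
  have hVinv : V⁻¹ = star V := Matrix.inv_eq_right_inv hV2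
  have hspec : Q = V * Matrix.diagonal lam * star V := by
    rw [hVdef, hlamdef]
    have h := hQh.spectral_theorem
    rwa [show RCLike.ofReal ∘ hQh.eigenvalues = hQh.eigenvalues from funext fun i => rfl] at h
  have hsmul : ∀ t : ℝ, t • Q = V * Matrix.diagonal (t • lam) * star V := by
    intro t
    rw [hspec, ← smul_mul_assoc, ← mul_smul_comm, Matrix.diagonal_smul]
  have hexpEq : ∀ t : ℝ, NormedSpace.exp (t • Q)
      = V * Matrix.diagonal (fun i => Real.exp (t * lam i)) * star V := by
    intro t
    rw [hsmul t, ← hVinv, Matrix.exp_conj V _ hVunit, hVinv,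
      Matrix.exp_diagonal, Pi.exp_def]
    congr 2
    funext i
    rw [← Real.exp_eq_exp_ℝ]
    rfl
  obtain ⟨W, hWdef⟩ : ∃ W, W = S * V := ⟨_, rfl⟩
  have hWH : Wᴴ = star V * S := by
    rw [hWdef, conjTranspose_mul, hSH, ← Matrix.star_eq_conjTranspose]
  have hWdet : IsUnit W.det := by
    rw [hWdef, det_mul]
    exact (isUnit_iff_ne_zero.mpr hSdet).mul hVdet
  have hgamma1 : ∀ t : ℝ, S * NormedSpace.exp (t • Q) * S
      = W * Matrix.diagonal (fun i => Real.exp (t * lam i)) * Wᴴ := by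
    intro t
    rw [hexpEq t, hWH, hWdef]
    simp only [Matrix.mul_assoc]
  have hdiagsum : ∀ d : Fin n → ℝ,
      Matrix.diagonal d = ∑ i, d i • Matrix.diagonal (Pi.single i 1) := by
    intro d
    ext j k
    rw [Matrix.sum_apply]
    by_cases hjk : j = k
    · subst hjk
      simp [Matrix.diagonal_apply, Pi.single_apply]
    · simp [Matrix.diagonal_apply, hjk]
  obtain ⟨C, hCdef⟩ : ∃ C : Fin n → Matrix (Fin m) (Fin m) ℝ,
      C = fun i => T (W * Matrix.diagonal (Pi.single i 1) * Wᴴ) := ⟨_, rfl⟩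
  have hKpsd : ∀ i : Fin n, (W * Matrix.diagonal (Pi.single i 1) * Wᴴ).PosSemidef := fun i =>
    (posSemidef_diagonal_iff.mpr (fun j => by
      by_cases h : j = i <;> simp [Pi.single_apply, h])).mul_mul_conjTranspose_same W
  have hCpsd : ∀ i, (C i).PosSemidef := fun i => by rw [hCdef]; exact hTpsd _ (hKpsd i)
  have hTgamma : ∀ t : ℝ,
      T (S * NormedSpace.exp (t • Q) * S) = ∑ i, Real.exp (t * lam i) • C i := by
    intro t
    rw [hgamma1 t, hdiagsum (fun i => Real.exp (t * lam i)), Finset.mul_sum, Finset.sum_mul,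
      map_sum]
    refine Finset.sum_congr rfl fun i _ => ?_
    rw [mul_smul_comm, smul_mul_assoc]
    simp only [hCdef, _root_.map_smul]
  have hgammaPD : ∀ t : ℝ, (S * NormedSpace.exp (t • Q) * S).PosDef := by
    intro t
    rw [hgamma1 t]
    exact LogDetGCvx.posDef_conj (Matrix.PosDef.diagonal fun i => Real.exp_pos _) hWdet
  have hTgPD : ∀ t, (T (S * NormedSpace.exp (t • Q) * S)).PosDef :=
    fun t => hTpd _ (hgammaPD t)
  obtain ⟨B, hBdef⟩ : ∃ B : Fin n → Matrix (Fin m) (Fin m) ℝ,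
      B = fun i => (hCpsd i).1.cfc Real.sqrt := ⟨_, rfl⟩
  have hBB : ∀ i, B i * B i = C i := fun i => by
    rw [hBdef]; exact (LogDetGCvx.cfc_sqrt_facts (hCpsd i)).2
  have hBsym : ∀ (i : Fin n) (a b : Fin m), B i a b = B i b a := by
    intro i a b
    have h : (B i)ᴴ = B i := by rw [hBdef]; exact (LogDetGCvx.cfc_sqrt_facts (hCpsd i)).1.1
    conv_lhs => rw [← h]
    simp [conjTranspose_apply]
  obtain ⟨Xm, hXmdef⟩ : ∃ Xm : ℝ → Matrix (Fin m) (Fin n × Fin m) ℝ,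
      Xm = fun a => fun j p => Real.exp (a * lam p.1) * B p.1 j p.2 := ⟨_, rfl⟩
  have hXmul : ∀ a b : ℝ, Xm a * (Xm b)ᴴ = ∑ i, Real.exp ((a + b) * lam i) • C i := by
    intro a b
    ext j l
    have hRHS : (∑ i, Real.exp ((a + b) * lam i) • C i) j l
        = ∑ i, Real.exp ((a + b) * lam i) * ∑ kk, B i j kk * B i kk l := by
      rw [Matrix.sum_apply]
      refine Finset.sum_congr rfl fun i _ => ?_
      rw [Matrix.smul_apply, smul_eq_mul, ← hBB i, Matrix.mul_apply]
    rw [Matrix.mul_apply, hRHS, Fintype.sum_prod_type]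
    refine Finset.sum_congr rfl fun i _ => ?_
    rw [Finset.mul_sum]
    refine Finset.sum_congr rfl fun kk _ => ?_
    rw [hXmdef]
    simp only [conjTranspose_apply, star_trivial]
    rw [show (a + b) * lam i = a * lam i + b * lam i from by ring, Real.exp_add,
      hBsym i kk l]
    show Real.exp (a * lam i) * B i j kk * star (Real.exp (b * lam i) * B i l kk) = _
    rw [star_trivial]
    ring
  have hmidf : ∀ s t : ℝ,
      (T (S * NormedSpace.exp (((s + t) / 2) • Q) * S)).det ^ 2
        ≤ (T (S * NormedSpace.exp (s • Q) * S)).det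
          * (T (S * NormedSpace.exp (t • Q) * S)).det := by
    intro s t
    have h1 : T (S * NormedSpace.exp (s • Q) * S) = Xm (s / 2) * (Xm (s / 2))ᴴ := by
      rw [hTgamma s, hXmul (s / 2) (s / 2), show s / 2 + s / 2 = s from by ring]
    have h2 : T (S * NormedSpace.exp (t • Q) * S) = Xm (t / 2) * (Xm (t / 2))ᴴ := by
      rw [hTgamma t, hXmul (t / 2) (t / 2), show t / 2 + t / 2 = t from by ring]
    have h3 : T (S * NormedSpace.exp (((s + t) / 2) • Q) * S)
        = Xm (s / 2) * (Xm (t / 2))ᴴ := by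
      rw [hTgamma ((s + t) / 2), hXmul (s / 2) (t / 2),
        show s / 2 + t / 2 = (s + t) / 2 from by ring]
    rw [h1, h2, h3]
    exact LogDetGCvx.det_sq_le _ _ (h1 ▸ hTgPD s) (h2 ▸ hTgPD t)
  have hfpos : ∀ t : ℝ, 0 < (T (S * NormedSpace.exp (t • Q) * S)).det :=
    fun t => (hTgPD t).det_pos
  have hfcont : Continuous (fun t : ℝ => (T (S * NormedSpace.exp (t • Q) * S)).det) := by
    have he : (fun t : ℝ => (T (S * NormedSpace.exp (t • Q) * S)).det)
        = fun t => (∑ i, Real.exp (t * lam i) • C i).det := funext fun t => by rw [hTgamma t]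
    rw [he]
    apply Continuous.matrix_det
    apply continuous_finset_sum
    intro i _
    exact (Real.continuous_exp.comp (continuous_id.mul continuous_const)).smul continuous_const
  apply LogDetGCvx.convexOn_of_midpoint
  · exact hfcont.log fun t => (hfpos t).ne'
  · intro s t
    have hml := hmidf s t
    have h2 : Real.log ((T (S * NormedSpace.exp (((s + t) / 2) • Q) * S)).det ^ 2)
        ≤ Real.log ((T (S * NormedSpace.exp (s • Q) * S)).det
          * (T (S * NormedSpace.exp (t • Q) * S)).det) :=
      Real.log_le_log (pow_pos (hfpos ((s + t) / 2)) 2) hml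
    rw [Real.log_pow, Real.log_mul (hfpos s).ne' (hfpos t).ne'] at h2
    push_cast at h2
    linarith
end

section
/- Let b₁, …, b_m be vectors in ℝⁿ that span ℝⁿ. Then the function y ↦ log det(Σⱼ e^{yⱼ} · bⱼbⱼᵀ) is convex on ℝᵐ. (Consequently, in the rank-one case nⱼ = 1 for all j, the Lieb formulation of the Brascamp–Lieb constant becomes a concave maximization problem after the change of variables Xⱼ = e^{yⱼ}/pⱼ.) -/
/-!
Expanding the determinant multilinearly in its rows and averaging over the `n!` reorderings
of each row-index map `r : Fin n → Fin m` (a Cauchy–Binet identity) gives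
`det (∑ⱼ cⱼ bⱼbⱼᵀ) = ∑_r (det B_r)² / n! · ∏ₖ c_{r k}`, where `B_r` has rows `b_{r k}`.
With `cⱼ = e^{yⱼ}` this is a sum of exponentials of linear forms in `y` with nonnegative
weights, and the logarithm of such a sum is convex: after normalizing the two sums at the
endpoints to `1`, the convexity inequality is that of `exp`, summed termwise.
-/

open Matrix Real

namespace Matrix

variable {ι κ R : Type*} [Fintype ι] [Fintype κ] [DecidableEq κ]

theorem det_sum_smul_vecMulVec [CommRing R] (c : ι → R) (u v : ι → κ → R) :
    det (∑ j, c j • vecMulVec (u j) (v j)) =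
      ∑ r : κ → ι, (∏ k, c (r k) * u (r k) k) * det (of fun k => v (r k)) := by
  have hrows : ∑ j, c j • vecMulVec (u j) (v j) = of fun k => ∑ j, (c j * u j k) • v j := by
    ext k l
    simp [Matrix.sum_apply, vecMulVec_apply, mul_assoc]
  rw [hrows]
  exact (detRowAlternating.toMultilinearMap.map_sum _).trans
    (Finset.sum_congr rfl fun r _ => detRowAlternating.toMultilinearMap.map_smul_univ _ _)

theorem factorial_mul_det_sum_smul_vecMulVec [CommRing R] (c : ι → R) (u v : ι → κ → R) :
    (Fintype.card κ).factorial * det (∑ j, c j • vecMulVec (u j) (v j)) =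
      ∑ r : κ → ι, (∏ k, c (r k)) * det (of fun k => u (r k)) * det (of fun k => v (r k)) := by
  have hperm (σ : Equiv.Perm κ) : det (∑ j, c j • vecMulVec (u j) (v j)) =
      ∑ r : κ → ι, (∏ k, c (r k)) * det (of fun k => v (r k)) *
        (σ.sign * ∏ k, u (r (σ k)) k) := by
    rw [det_sum_smul_vecMulVec, ← (Equiv.arrowCongr σ.symm (Equiv.refl ι)).sum_comp]
    refine Finset.sum_congr rfl fun r _ => ?_
    have hv : det (of fun k => v (r (σ k))) = σ.sign * det (of fun k => v (r k)) :=
      det_permute σ (of fun k => v (r k))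
    simp only [Equiv.arrowCongr_apply, Equiv.symm_symm, Equiv.coe_refl, Function.comp_apply,
      id_eq, Finset.prod_mul_distrib, hv, Equiv.prod_comp σ (fun k => c (r k))]
    ring
  rw [← Fintype.card_perm, ← nsmul_eq_mul, ← Finset.card_univ, ← Finset.sum_const,
    Finset.sum_congr rfl fun σ _ => hperm σ, Finset.sum_comm]
  refine Finset.sum_congr rfl fun r _ => ?_
  rw [← Finset.mul_sum, det_apply' (of fun k => u (r k))]
  simp only [of_apply]
  ring

theorem det_sum_smul_vecMulVec_self [Field R] [CharZero R] (c : ι → R) (b : ι → κ → R) :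
    det (∑ j, c j • vecMulVec (b j) (b j)) =
      ∑ r : κ → ι, det (of fun k => b (r k)) ^ 2 / (Fintype.card κ).factorial * ∏ k, c (r k) := by
  have hfac : ((Fintype.card κ).factorial : R) ≠ 0 := Nat.cast_ne_zero.2 (Nat.factorial_ne_zero _)
  apply mul_left_cancel₀ hfac
  rw [factorial_mul_det_sum_smul_vecMulVec, Finset.mul_sum]
  refine Finset.sum_congr rfl fun r _ => ?_
  field_simp

end Matrix

theorem convexOn_log_sum_mul_exp {ι : Type*} [Fintype ι] {w : ι → ℝ} (hw : 0 ≤ w) :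
    ConvexOn ℝ Set.univ fun x : ι → ℝ => log (∑ i, w i * exp (x i)) := by
  obtain rfl | hw₀ := eq_or_ne w 0
  · simpa using convexOn_const (0 : ℝ) convex_univ
  obtain ⟨i₀, hi₀⟩ := Function.ne_iff.mp hw₀
  have hpos (x : ι → ℝ) : 0 < ∑ i, w i * exp (x i) :=
    Finset.sum_pos' (fun i _ => mul_nonneg (hw i) (exp_pos _).le)
      ⟨i₀, Finset.mem_univ _, mul_pos ((hw i₀).lt_of_ne' hi₀) (exp_pos _)⟩
  refine ⟨convex_univ, fun x _ z _ a b ha hb hab => ?_⟩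
  set P := ∑ i, w i * exp (x i)
  set Q := ∑ i, w i * exp (z i)
  set E := exp (a * log P + b * log Q)
  have hexp (i : ι) : exp ((a • x + b • z) i) ≤ (a * (exp (x i) / P) + b * (exp (z i) / Q)) * E := by
    have h := convexOn_exp.2 (Set.mem_univ (x i - log P)) (Set.mem_univ (z i - log Q)) ha hb hab
    rw [exp_sub, exp_sub, exp_log (hpos x), exp_log (hpos z)] at h
    calc exp ((a • x + b • z) i) = exp (a • (x i - log P) + b • (z i - log Q)) * E := by
          rw [← exp_add]; simp only [Pi.add_apply, Pi.smul_apply, smul_eq_mul]; ring_nf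
      _ ≤ _ := by simpa only [smul_eq_mul] using mul_le_mul_of_nonneg_right h (exp_pos _).le
  rw [smul_eq_mul, smul_eq_mul, log_le_iff_le_exp (hpos _)]
  calc ∑ i, w i * exp ((a • x + b • z) i)
      ≤ ∑ i, w i * ((a * (exp (x i) / P) + b * (exp (z i) / Q)) * E) :=
        Finset.sum_le_sum fun i _ => mul_le_mul_of_nonneg_left (hexp i) (hw i)
    _ = (a * (P / P) + b * (Q / Q)) * E := by
        simp only [P, Q, Finset.sum_div, Finset.mul_sum, Finset.sum_mul, ← Finset.sum_add_distrib]
        exact Finset.sum_congr rfl fun i _ => by ring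
    _ = E := by rw [div_self (hpos x).ne', div_self (hpos z).ne', mul_one, mul_one, hab, one_mul]

theorem logDet_sum_exp_rank_one_convex_general (n m : ℕ) (b : Fin m → (Fin n → ℝ)) :
    ConvexOn ℝ Set.univ
      (fun y : Fin m → ℝ =>
        Real.log (∑ j, Real.exp (y j) • Matrix.vecMulVec (b j) (b j)).det) := by
  let L : (Fin m → ℝ) →ₗ[ℝ] (Fin n → Fin m) → ℝ :=
    LinearMap.pi fun r => ∑ k, LinearMap.proj (r k)
  have hdet (y : Fin m → ℝ) : (∑ j, exp (y j) • vecMulVec (b j) (b j)).det =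
      ∑ r, det (of fun k => b (r k)) ^ 2 / n.factorial * exp (L y r) := by
    have hL (r : Fin n → Fin m) : L y r = ∑ k, y (r k) := by simp [L]
    simp only [det_sum_smul_vecMulVec_self, Fintype.card_fin, hL, exp_sum]
  have hw : (0 : (Fin n → Fin m) → ℝ) ≤ fun r => det (of fun k => b (r k)) ^ 2 / n.factorial :=
    fun r => by positivity
  have h := (convexOn_log_sum_mul_exp hw).comp_linearMap L
  rw [Set.preimage_univ, Function.comp_def] at h
  simpa only [hdet] using h

/-- if the vectors `b₁, …, b_m` span `ℝⁿ`, then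
`y ↦ log det(Σⱼ e^{yⱼ}·bⱼbⱼᵀ)` is convex on `ℝᵐ`.  (This is the rank-one case of
the Lieb formulation of the Brascamp–Lieb constant after the substitution
`Xⱼ = e^{yⱼ}/pⱼ`.) -/
theorem logDet_sum_exp_rank_one_convex (n m : ℕ) (b : Fin m → (Fin n → ℝ))
    (hspan : Submodule.span ℝ (Set.range b) = ⊤) :
    ConvexOn ℝ Set.univ
      (fun y : Fin m → ℝ =>
        Real.log (∑ j, Real.exp (y j) • Matrix.vecMulVec (b j) (b j)).det) :=
  logDet_sum_exp_rank_one_convex_general n m b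
end
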